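/- Let W be a nonempty type equipped with a unary operation neg : W → W and two binary operations conj, disj : W → W → W. Let At be a type of atoms and let Fm be the free formula algebra over At (an inductive type with constructors for atoms, unary negation, binary conjunction and binary disjunction). Given an atom interpretation i : At → W, let v : Fm → W be its unique homomorphic extension (v(atom a) = i a, v(~φ) = neg (v φ), v(φ ∧ ψ) = conj (v φ) (v ψ), v(φ ∨ ψ) = disj (v φ) (v ψ)). Define the Kripke satisfaction relation sat : W → Fm → Prop by: sat w (atom a) ↔ w = i a; sat w (~φ) ↔ ∃ y, w = neg y ∧ sat y φ; sat w (φ ∧ ψ) ↔ ∃ y z, w = conj z y ∧ sat z φ ∧ sat y ψ; sat w (φ ∨ ψ) ↔ ∃ y z, w = disj z y ∧ sat z φ ∧ sat y ψ. Then for every formula φ : Fm, the extension {w : W | sat w φ} equals the singleton {v φ}. -/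
import Mathlib


/-- Free formula algebra over atoms `At` with unary negation and binary
conjunction and disjunction. -/
inductive Fm (At : Type) : Type
  | atom : At → Fm At
  | neg : Fm At → Fm At
  | conj : Fm At → Fm At → Fm At
  | disj : Fm At → Fm At → Fm At

/-- Unique homomorphic extension of an atom interpretation `i : At → W`. -/
def Fm.val {W At : Type} (neg : W → W) (conj disj : W → W → W) (i : At → W) :
    Fm At → W
  | .atom a => i a
  | .neg φ => neg (Fm.val neg conj disj i φ)
  | .conj φ ψ => conj (Fm.val neg conj disj i φ) (Fm.val neg conj disj i ψ)
  | .disj φ ψ => disj (Fm.val neg conj disj i φ) (Fm.val neg conj disj i ψ)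

/-- Kripke satisfaction relation on worlds `W` for the encapsulated formulas,
with existential modal semantics for the connectives. -/
def Fm.sat {W At : Type} (neg : W → W) (conj disj : W → W → W) (i : At → W) :
    W → Fm At → Prop
  | w, .atom a => w = i a
  | w, .neg φ => ∃ y, w = neg y ∧ Fm.sat neg conj disj i y φ
  | w, .conj φ ψ => ∃ y z, w = conj z y ∧ Fm.sat neg conj disj i z φ ∧
      Fm.sat neg conj disj i y ψ
  | w, .disj φ ψ => ∃ y z, w = disj z y ∧ Fm.sat neg conj disj i z φ ∧
      Fm.sat neg conj disj i y ψ

/-- Every encapsulated formula is satisfied exactly at the single possible world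
equal to its many-valued algebraic truth value. -/
theorem extension_eq_singleton_value {W At : Type} [Nonempty W]
    (neg : W → W) (conj disj : W → W → W) (i : At → W) (φ : Fm At) :
    {w : W | Fm.sat neg conj disj i w φ} = {Fm.val neg conj disj i φ} := by
  induction φ with
  | atom a => rfl
  | neg φ ih =>
    ext w
    simp only [Fm.sat, Fm.val, Set.mem_setOf_eq, Set.mem_singleton_iff]
    constructor
    · rintro ⟨y, rfl, hy⟩
      have : y ∈ {w : W | Fm.sat neg conj disj i w φ} := hy
      rw [ih] at this; rw [this]
    · rintro rfl
      exact ⟨_, rfl, by have : Fm.val neg conj disj i φ ∈ {w : W | Fm.sat neg conj disj i w φ} := ih ▸ rfl; exact this⟩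
  | conj φ ψ ihφ ihψ =>
    ext w
    simp only [Fm.sat, Fm.val, Set.mem_setOf_eq, Set.mem_singleton_iff]
    constructor
    · rintro ⟨y, z, rfl, hz, hy⟩
      have hz' : z ∈ {w : W | Fm.sat neg conj disj i w φ} := hz
      have hy' : y ∈ {w : W | Fm.sat neg conj disj i w ψ} := hy
      rw [ihφ] at hz'; rw [ihψ] at hy'; rw [hz', hy']
    · rintro rfl
      refine ⟨_, _, rfl, ?_, ?_⟩
      · have : Fm.val neg conj disj i φ ∈ {w : W | Fm.sat neg conj disj i w φ} := ihφ ▸ rfl; exact this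
      · have : Fm.val neg conj disj i ψ ∈ {w : W | Fm.sat neg conj disj i w ψ} := ihψ ▸ rfl; exact this
  | disj φ ψ ihφ ihψ =>
    ext w
    simp only [Fm.sat, Fm.val, Set.mem_setOf_eq, Set.mem_singleton_iff]
    constructor
    · rintro ⟨y, z, rfl, hz, hy⟩
      have hz' : z ∈ {w : W | Fm.sat neg conj disj i w φ} := hz
      have hy' : y ∈ {w : W | Fm.sat neg conj disj i w ψ} := hy
      rw [ihφ] at hz'; rw [ihψ] at hy'; rw [hz', hy']
    · rintro rfl
      refine ⟨_, _, rfl, ?_, ?_⟩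
      · have : Fm.val neg conj disj i φ ∈ {w : W | Fm.sat neg conj disj i w φ} := ihφ ▸ rfl; exact this
      · have : Fm.val neg conj disj i ψ ∈ {w : W | Fm.sat neg conj disj i w ψ} := ihψ ▸ rfl; exact this
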